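/- Let G be a Lie group that is a union of fewer than 𝔠 compact subsets, and let φ : G → H be a continuous bijective group homomorphism onto a compact Hausdorff group H. Then G is compact. -/

import Mathlib

/-- `X` is a union of fewer than `𝔠` compact subsets. -/
def SigmaCompactLtContinuum (X : Type*) [TopologicalSpace X] : Prop :=
  ∃ 𝒦 : Set (Set X), Cardinal.mk 𝒦 < Cardinal.continuum ∧
    (∀ K ∈ 𝒦, IsCompact K) ∧ ⋃₀ 𝒦 = Set.univ

/-!
A Lie group is locally compact, so `G` has an open subgroup `P = ⋃ₙ Kₙ` with every `Kₙ` compact.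
If some `φ '' Kₙ` has interior, finitely many of its translates cover the compact group `H`, and
pulling them back along the bijection `φ` covers `G` by finitely many translates of `Kₙ`.
Otherwise `φ '' P` is a meagre subgroup of the compact group `H`. A Cantor scheme of open sets
indexed by binary words, refined at level `n` so that `x⁻¹ * y` avoids the first `n` nowhere dense
pieces of `φ '' P` whenever `x` and `y` lie in the sets of distinct words, produces `𝔠` elements
of `H` in distinct cosets of `φ '' P`. But the cosets of `φ '' P` are the images of the cosets
of `P`, and each of the fewer than `𝔠` compact sets covering `G` meets only finitely many cosets
of the open subgroup `P`.
-/

open Set Function Pointwise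

universe u v

theorem dense_iInter_of_isOpen_of_finite {X ι : Type*} [TopologicalSpace X] [Finite ι]
    {f : ι → Set X} (ho : ∀ i, IsOpen (f i)) (hd : ∀ i, Dense (f i)) : Dense (⋂ i, f i) := by
  simpa only [sInter_range] using
    (finite_range f).dense_sInter (forall_mem_range.2 ho) (forall_mem_range.2 hd)

theorem exists_univ_pi_closure_subset {X ι : Type*} [TopologicalSpace X] [RegularSpace X]
    [Finite ι] {W : Set (ι → X)} (hW : IsOpen W) (hne : W.Nonempty) :
    ∃ V : ι → Set X, (∀ i, IsOpen (V i) ∧ (V i).Nonempty) ∧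
      univ.pi (fun i ↦ closure (V i)) ⊆ W := by
  obtain ⟨p, hp⟩ := hne
  obtain ⟨N, ⟨hpN, hN⟩, hNW⟩ := (hasBasis_opens_closure p).mem_iff.mp (hW.mem_nhds hp)
  obtain ⟨V, hV, hVN⟩ := isOpen_pi_iff'.mp hN p hpN
  refine ⟨V, fun i ↦ ⟨(hV i).1, p i, (hV i).2⟩, ?_⟩
  rw [← closure_pi_set]
  exact (closure_mono hVN).trans hNW

theorem Set.pairwise_of_univ_pi_subset {X ι : Type*} {R : X → X → Prop} {s : ι → Set X}
    (hs : ∀ i, (s i).Nonempty) (h : univ.pi s ⊆ {x | Pairwise fun i j ↦ R (x i) (x j)}) :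
    Pairwise fun i j ↦ ∀ a ∈ s i, ∀ b ∈ s j, R a b := by
  classical
  choose p hp using hs
  intro i j hij a ha b hb
  have hmem : update (update p i a) j b ∈ univ.pi s := by
    intro k _
    rcases eq_or_ne k j with rfl | hkj
    · simpa using hb
    rw [update_of_ne hkj]
    rcases eq_or_ne k i with rfl | hki
    · simpa using ha
    rw [update_of_ne hki]
    exact hp k
  simpa [update_of_ne hij, hij.symm] using h hmem hij

open Cardinal in
theorem SigmaCompactLtContinuum.mk_range_lt_continuum {X : Type u} {Y : Type v}
    [TopologicalSpace X] (hX : SigmaCompactLtContinuum X) {f : X → Y}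
    (hf : IsLocallyConstant f) : #(range f) < 𝔠 := by
  obtain ⟨𝒦, hcard, hcomp, hcover⟩ := hX
  have hrange : range f = ⋃ K : 𝒦, f '' K := by
    rw [← image_univ, ← hcover, sUnion_eq_iUnion, image_iUnion]
  have hfin (K : Set X) (hK : IsCompact K) : (f '' K).Finite := by
    have := isCompact_iff_compactSpace.mp hK
    simpa [range_comp] using
      (hf.comp_continuous (continuous_subtype_val : Continuous ((↑) : K → X))).range_finite
  rw [← lift_lt_continuum.{v, u}, hrange]
  calc lift #(⋃ K : 𝒦, f '' K) ≤ lift #𝒦 * ⨆ K : 𝒦, lift #(f '' K) := mk_iUnion_le_lift _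
    _ ≤ lift #𝒦 * ℵ₀ := by
        gcongr
        exact ciSup_le' fun K ↦ lift_le_aleph0.mpr (hfin K (hcomp K K.2)).countable.le_aleph0
    _ < 𝔠 := mul_lt_of_lt aleph0_le_continuum (lift_lt_continuum.mpr hcard) aleph0_lt_continuum

theorem Subgroup.closure_subset_iUnion_pow {G : Type*} [Group G] (s : Set G) :
    (closure s : Set G) ⊆ ⋃ n : ℕ, (s ∪ s⁻¹) ^ n := by
  have hsymm : (s ∪ s⁻¹)⁻¹ = s ∪ s⁻¹ := by rw [union_inv, inv_inv, union_comm]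
  intro x hx
  induction hx using closure_induction with
  | mem x hx => exact mem_iUnion.2 ⟨1, by simp [hx]⟩
  | one => exact mem_iUnion.2 ⟨0, by simp⟩
  | mul x y _ _ hx hy =>
    obtain ⟨m, hm⟩ := mem_iUnion.1 hx
    obtain ⟨n, hn⟩ := mem_iUnion.1 hy
    exact mem_iUnion.2 ⟨m + n, pow_add (s ∪ s⁻¹) m n ▸ mul_mem_mul hm hn⟩
  | inv x _ hx =>
    obtain ⟨n, hn⟩ := mem_iUnion.1 hx
    exact mem_iUnion.2 ⟨n, by rw [← hsymm, inv_pow]; exact inv_mem_inv.2 hn⟩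

section LocallyCompactGroup

variable {G : Type*} [TopologicalSpace G] [Group G]

theorem exists_isOpen_isSigmaCompact_subgroup [IsTopologicalGroup G]
    [WeaklyLocallyCompactSpace G] :
    ∃ P : Subgroup G, IsOpen (P : Set G) ∧ IsSigmaCompact (P : Set G) := by
  obtain ⟨V, hVc, hV1⟩ := exists_compact_mem_nhds (1 : G)
  have hpow (n : ℕ) : IsCompact ((V ∪ V⁻¹) ^ n) := by
    induction n with
    | zero => simp
    | succ n ih => rw [pow_succ]; exact ih.mul (hVc.union hVc.inv)
  have hsub : V ∪ V⁻¹ ⊆ Subgroup.closure V :=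
    union_subset Subgroup.subset_closure (Subgroup.inv_subset_closure V)
  refine ⟨Subgroup.closure V,
    Subgroup.isOpen_of_mem_nhds _ (Filter.mem_of_superset hV1 Subgroup.subset_closure),
    fun n ↦ (V ∪ V⁻¹) ^ n, hpow, ?_⟩
  exact (iUnion_subset fun n ↦ Subgroup.pow_subset hsub).antisymm
    (Subgroup.closure_subset_iUnion_pow V)

theorem MonoidHom.compactSpace_of_bijective_of_interior_image_nonempty [ContinuousMul G]
    {H : Type*} [TopologicalSpace H] [Group H] [IsTopologicalGroup H] [CompactSpace H]
    (φ : G →* H) (hφ : Bijective φ) {K : Set G} (hK : IsCompact K)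
    (hint : (interior (φ '' K)).Nonempty) : CompactSpace G := by
  obtain ⟨t, ht⟩ := compact_covered_by_mul_left_translates isCompact_univ hint
  choose g hg using hφ.surjective
  have hcover : (univ : Set G) ⊆ ⋃ h ∈ t, (g h * ·) ⁻¹' K := by
    intro a _
    obtain ⟨h, hht, b, hbK, hb⟩ := mem_iUnion₂.1 (ht (mem_univ (φ a)))
    have hba : g h * a = b := hφ.injective (by simp [hg, hb])
    exact mem_iUnion₂.2 ⟨h, hht, by simpa [hba] using hbK⟩
  refine ⟨IsCompact.of_isClosed_subset ?_ isClosed_univ hcover⟩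
  exact t.isCompact_biUnion fun h _ ↦ (Homeomorph.mulLeft (g h)).isCompact_preimage.mpr hK

end LocallyCompactGroup

section CantorScheme

variable {H : Type*} [TopologicalSpace H] [Group H]

theorem Dense.setOf_inv_mul_mem [ContinuousMul H] {ι : Type*} {A : Set H} (hA : Dense A)
    {i j : ι} (hij : i ≠ j) : Dense {x : ι → H | (x i)⁻¹ * x j ∈ A} := by
  classical
  refine dense_iff_inter_open.mpr fun W hW ⟨x, hx⟩ ↦ ?_
  -- moving only the `j`-th coordinate sweeps `(x i)⁻¹ * x j` over all of `H`
  let g : H → ι → H := fun t ↦ update x j (x i * t)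
  have hg : Continuous g := continuous_const.update j (continuous_const.mul continuous_id)
  have hgx : g ((x i)⁻¹ * x j) = x := by simp [g]
  obtain ⟨t, htW, htA⟩ := hA.inter_open_nonempty _ (hW.preimage hg) ⟨_, hgx ▸ hx⟩
  refine ⟨g t, htW, ?_⟩
  simpa [g, update_of_ne hij] using htA

variable [IsTopologicalGroup H]

theorem isOpen_dense_setOf_pairwise_inv_mul_notMem {ι κ : Type*} [Finite ι] [Finite κ]
    {C : κ → Set H} (hC : ∀ k, IsNowhereDense (C k)) :
    IsOpen {x : ι → H | Pairwise fun i j ↦ ∀ k, (x i)⁻¹ * x j ∉ closure (C k)} ∧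
      Dense {x : ι → H | Pairwise fun i j ↦ ∀ k, (x i)⁻¹ * x j ∉ closure (C k)} := by
  set T : ι × ι × κ → Set (ι → H) :=
    fun p ↦ {x | p.1 ≠ p.2.1 → (x p.1)⁻¹ * x p.2.1 ∈ (closure (C p.2.2))ᶜ}
  have hT : {x : ι → H | Pairwise fun i j ↦ ∀ k, (x i)⁻¹ * x j ∉ closure (C k)} = ⋂ p, T p := by
    ext x
    simp only [mem_ofPred_eq, mem_iInter, mem_compl_iff, T]
    exact ⟨fun h p hp ↦ h hp p.2.2, fun h i j hij k ↦ h (i, j, k) hij⟩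
  have hTod : ∀ p, IsOpen (T p) ∧ Dense (T p) := by
    rintro ⟨i, j, k⟩
    by_cases hij : i = j
    · simp [T, hij]
    · have hT' : T (i, j, k) = {x : ι → H | (x i)⁻¹ * x j ∈ (closure (C k))ᶜ} := by simp [T, hij]
      rw [hT']
      refine ⟨isClosed_closure.isOpen_compl.preimage (by fun_prop), ?_⟩
      exact Dense.setOf_inv_mul_mem (interior_eq_empty_iff_dense_compl.mp (hC k)) hij
  rw [hT]
  exact ⟨isOpen_iInter_of_finite fun p ↦ (hTod p).1,
    dense_iInter_of_isOpen_of_finite (fun p ↦ (hTod p).1) fun p ↦ (hTod p).2⟩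

theorem exists_cantorScheme_inv_mul_notMem {C : ℕ → Set H} (hC : ∀ k, IsNowhereDense (C k)) :
    ∃ W : (n : ℕ) → (Fin n → Bool) → Set H, (∀ n s, (W n s).Nonempty) ∧
      (∀ n s, closure (W (n + 1) s) ⊆ W n (Fin.init s)) ∧
      ∀ n, Pairwise fun s t : Fin (n + 1) → Bool ↦ ∀ x ∈ closure (W (n + 1) s),
        ∀ y ∈ closure (W (n + 1) t), ∀ k : Fin (n + 1), x⁻¹ * y ∉ C k := by
  let Level (n : ℕ) := {U : (Fin n → Bool) → Set H // ∀ s, IsOpen (U s) ∧ (U s).Nonempty}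
  have step (n : ℕ) (U : Level n) : ∃ V : Level (n + 1),
      univ.pi (fun s ↦ closure (V.1 s)) ⊆ (univ.pi fun s ↦ U.1 (Fin.init s)) ∩
        {x | Pairwise fun s t ↦ ∀ k : Fin (n + 1), (x s)⁻¹ * x t ∉ closure (C k)} := by
    obtain ⟨hSo, hSd⟩ := isOpen_dense_setOf_pairwise_inv_mul_notMem
      (ι := Fin (n + 1) → Bool) fun k : Fin (n + 1) ↦ hC k
    have hUo : IsOpen (univ.pi fun s : Fin (n + 1) → Bool ↦ U.1 (Fin.init s)) :=
      isOpen_set_pi finite_univ fun s _ ↦ (U.2 _).1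
    obtain ⟨V, hV, hVS⟩ := exists_univ_pi_closure_subset (hUo.inter hSo)
      (hSd.inter_open_nonempty _ hUo (univ_pi_nonempty_iff.2 fun s ↦ (U.2 _).2))
    exact ⟨⟨V, hV⟩, hVS⟩
  choose next hnext using step
  let W (n : ℕ) : Level n := Nat.rec ⟨fun _ ↦ univ, fun _ ↦ ⟨isOpen_univ, univ_nonempty⟩⟩ next n
  have hne (n : ℕ) (s : Fin (n + 1) → Bool) : (closure ((W (n + 1)).1 s)).Nonempty :=
    ((W (n + 1)).2 s).2.closure
  refine ⟨fun n ↦ (W n).1, fun n s ↦ ((W n).2 s).2, fun n ↦ ?_, fun n ↦ ?_⟩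
  · have := (hnext n (W n)).trans inter_subset_left
    rw [pi_subset_pi_iff, ← not_nonempty_iff_eq_empty, univ_pi_nonempty_iff] at this
    exact fun s ↦ this.resolve_right (not_not.mpr (hne n)) s (mem_univ s)
  · intro s t hst x hx y hy k hk
    have hsep := pairwise_of_univ_pi_subset
      (R := fun a b ↦ ∀ k : Fin (n + 1), a⁻¹ * b ∉ closure (C k))
      (hne n) ((hnext n (W n)).trans inter_subset_right)
    exact hsep hst x hx y hy k (subset_closure hk)

theorem exists_pairwise_inv_mul_notMem [CompactSpace H] {C : ℕ → Set H}
    (hC : ∀ k, IsNowhereDense (C k)) :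
    ∃ f : (ℕ → Bool) → H, Pairwise fun α β ↦ ∀ k, (f α)⁻¹ * f β ∉ C k := by
  obtain ⟨W, hne, hsub, hsep⟩ := exists_cantorScheme_inv_mul_notMem hC
  let K (α : ℕ → Bool) (n : ℕ) : Set H := closure (W n fun i ↦ α i)
  have hK (α : ℕ → Bool) : (⋂ n, K α n).Nonempty :=
    IsCompact.nonempty_iInter_of_sequence_nonempty_isCompact_isClosed (K α)
      (fun n ↦ (hsub n _).trans subset_closure)
      (fun n ↦ (hne n _).closure) isClosed_closure.isCompact fun n ↦ isClosed_closure
  choose f hf using hK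
  refine ⟨f, fun α β hαβ k ↦ ?_⟩
  obtain ⟨m, hm⟩ := Function.ne_iff.mp hαβ
  have hmem (γ : ℕ → Bool) : f γ ∈ K γ (max m k + 1) := mem_iInter.mp (hf γ) _
  refine hsep (max m k) (fun h ↦ hm ?_) _ (hmem α) _ (hmem β) ⟨k, by omega⟩
  exact congrFun h ⟨m, by omega⟩

open Cardinal in
theorem Subgroup.continuum_le_mk_quotient_of_isMeagre [CompactSpace H] (D : Subgroup H)
    (hD : IsMeagre (D : Set H)) : 𝔠 ≤ #(H ⧸ D) := by
  obtain ⟨S, hS, hSc, hDS⟩ := isMeagre_iff_countable_union_isNowhereDense.mp hD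
  obtain ⟨C, rfl⟩ := hSc.exists_eq_range (by obtain ⟨t, ht, -⟩ := hDS D.one_mem; exact ⟨t, ht⟩)
  obtain ⟨f, hf⟩ := exists_pairwise_inv_mul_notMem fun k ↦ hS _ (mem_range_self k)
  have hinj : Injective fun α ↦ (f α : H ⧸ D) := by
    intro α β h
    by_contra hαβ
    obtain ⟨_, ⟨k, rfl⟩, hk⟩ := hDS (QuotientGroup.eq.mp h)
    exact hf hαβ k hk
  simpa [two_power_aleph0] using lift_mk_le_lift_mk_of_injective hinj

end CantorScheme

theorem compact_of_lie_bijective_to_compact_general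
    {E : Type*} [NormedAddCommGroup E] [NormedSpace ℝ E] [FiniteDimensional ℝ E]
    {G : Type*} [TopologicalSpace G] [ChartedSpace E G] [Group G]
    [IsTopologicalGroup G]
    {H : Type*} [TopologicalSpace H] [Group H] [IsTopologicalGroup H]
    [CompactSpace H] [T2Space H]
    (hG : SigmaCompactLtContinuum G)
    (φ : G →* H) (hcont : Continuous φ) (hbij : Function.Bijective φ) :
    CompactSpace G := by
  have : LocallyCompactSpace G := ChartedSpace.locallyCompactSpace E G
  obtain ⟨P, hPo, K, hK, hPK⟩ := exists_isOpen_isSigmaCompact_subgroup (G := G)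
  by_cases hint : ∃ n, (interior (φ '' K n)).Nonempty
  · obtain ⟨n, hn⟩ := hint
    exact φ.compactSpace_of_bijective_of_interior_image_nonempty hbij (hK n) hn
  push Not at hint
  have hmeagre : IsMeagre (P.map φ : Set H) := by
    rw [Subgroup.coe_map, ← hPK, image_iUnion]
    exact isMeagre_iUnion fun n ↦ IsNowhereDense.isMeagre
      (((hK n).image hcont).isClosed.isNowhereDense_iff.mpr (hint n))
  have hlc : IsLocallyConstant fun g : G ↦ (φ g : H ⧸ P.map φ) := by
    refine (IsLocallyConstant.iff_eventually_eq _).2 fun x ↦ ?_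
    filter_upwards [(hPo.preimage (by fun_prop : Continuous (·⁻¹ * x))).mem_nhds (by simp)]
      with y hy
    exact QuotientGroup.eq.2 (by simpa using Subgroup.mem_map_of_mem φ hy)
  have hlt := hG.mk_range_lt_continuum hlc
  have hsurj : Surjective fun g : G ↦ (φ g : H ⧸ P.map φ) :=
    QuotientGroup.mk_surjective.comp hbij.surjective
  rw [hsurj.range_eq, Cardinal.mk_univ] at hlt
  exact absurd ((P.map φ).continuum_le_mk_quotient_of_isMeagre hmeagre) hlt.not_ge

theorem compact_of_lie_bijective_to_compact
    {E : Type*} [NormedAddCommGroup E] [NormedSpace ℝ E] [FiniteDimensional ℝ E]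
    {G : Type*} [TopologicalSpace G] [ChartedSpace E G] [Group G]
    [IsTopologicalGroup G] [LieGroup (modelWithCornersSelf ℝ E) (⊤ : ℕ∞) G]
    {H : Type*} [TopologicalSpace H] [Group H] [IsTopologicalGroup H]
    [CompactSpace H] [T2Space H]
    (hG : SigmaCompactLtContinuum G)
    (φ : G →* H) (hcont : Continuous φ) (hbij : Function.Bijective φ) :
    CompactSpace G :=
  compact_of_lie_bijective_to_compact_general (E := E) hG φ hcont hbij
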